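/- Let k ∈ ℂ with Im k > 0 and let f : ℝ → ℂ be continuous with compact support contained in (0,∞). Define u(x) = ∫₀^∞ g_k(x,y) f(y) dy for x ≥ 0. Then u(0) = 0, u is square-integrable on (0,∞), u is twice differentiable on (0,∞), and −u''(x) − k² u(x) = f(x) for every x > 0. -/

import Mathlib

open MeasureTheory Set

/-- The integral kernel of the resolvent `(-Δ - k²)⁻¹` of the Dirichlet Laplacian on the
half-line `(0,∞)`. -/
noncomputable def halfLineResolventKernel (k : ℂ) (x y : ℝ) : ℂ :=
  (Complex.exp (Complex.I * k * (x + y)) - Complex.exp (Complex.I * k * |x - y|)) /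
    (2 * Complex.I * k)

/-- The function `u = (-Δ - k²)⁻¹ f` on the half-line. -/
noncomputable def halfLineResolvent (k : ℂ) (f : ℝ → ℂ) (x : ℝ) : ℂ :=
  ∫ y in Ioi (0 : ℝ), halfLineResolventKernel k x y * f y

/-!
Write `c = ik` and `A = ∫₀^∞ e^{cy} f(y) dy`. For `x ≥ 0`, splitting the integral at `y = x` makes
the kernel a product of exponentials in `x` and in `y` on each piece, which gives
`u(x) = (φ(x) - ψ(x)) / (2c)` with `φ(x) = e^{cx} (A - ∫₀^x e^{-cy} f)` and
`ψ(x) = e^{-cx} (A - ∫₀^x e^{cy} f)` (variation of constants). The fundamental theorem of calculus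
gives `φ' = cφ - f` and `ψ' = -cψ - f`, hence `u' = (φ + ψ) / 2` and `u'' = c² u - f = -k² u - f`,
while `u(0) = (A - A) / (2c) = 0`. To the right of the support of `f` the kernel is `e^{ikx}` times
a function of `y`, so `|u(x)|²` is a multiple of `e^{-2 Im k x}` there and is integrable.
-/

open Complex Filter Topology Asymptotics

noncomputable section

section Duhamel

variable {c a b : ℂ} {f : ℝ → ℂ}

def duhamel (c a : ℂ) (f : ℝ → ℂ) (x : ℝ) : ℂ :=
  cexp (c * x) * (a - ∫ y in (0 : ℝ)..x, cexp (-c * y) * f y)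

def duhamelSolution (c a b : ℂ) (f : ℝ → ℂ) (x : ℝ) : ℂ :=
  (duhamel c a f x - duhamel (-c) b f x) / (2 * c)

theorem hasDerivAt_duhamel (hf : Continuous f) (x : ℝ) :
    HasDerivAt (duhamel c a f) (c * duhamel c a f x - f x) x := by
  have hexp : HasDerivAt (fun x : ℝ => cexp (c * x)) (c * cexp (c * x)) x := by
    simpa [mul_comm] using ((hasDerivAt_id (x : ℂ)).const_mul c).cexp.comp_ofReal
  have hcont : Continuous fun y : ℝ => cexp (-c * y) * f y := by fun_prop
  have hint : HasDerivAt (fun x => ∫ y in (0 : ℝ)..x, cexp (-c * y) * f y)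
      (cexp (-c * x) * f x) x :=
    intervalIntegral.integral_hasDerivAt_right (hcont.intervalIntegrable _ _)
      (hcont.stronglyMeasurableAtFilter _ _) hcont.continuousAt
  have hinv : cexp (c * x) * cexp (-c * x) = 1 := by rw [← exp_add]; simp
  refine (hexp.fun_mul (hint.const_sub a)).congr_deriv ?_
  rw [duhamel]
  linear_combination -f x * hinv

theorem hasDerivAt_duhamelSolution (hc : c ≠ 0) (hf : Continuous f) (x : ℝ) :
    HasDerivAt (duhamelSolution c a b f) ((duhamel c a f x + duhamel (-c) b f x) / 2) x := by
  refine (((hasDerivAt_duhamel (a := a) hf x).fun_sub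
    (hasDerivAt_duhamel (c := -c) (a := b) hf x)).div_const (2 * c)).congr_deriv ?_
  rw [div_eq_div_iff (mul_ne_zero two_ne_zero hc) two_ne_zero]
  ring

theorem hasDerivAt_duhamel_add_div_two (hf : Continuous f) (x : ℝ) :
    HasDerivAt (fun x => (duhamel c a f x + duhamel (-c) b f x) / 2)
      (c ^ 2 * duhamelSolution c a b f x - f x) x := by
  refine (((hasDerivAt_duhamel (a := a) hf x).fun_add
    (hasDerivAt_duhamel (c := -c) (a := b) hf x)).div_const 2).congr_deriv ?_
  rw [duhamelSolution]
  field_simp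
  ring

end Duhamel

section Resolvent

variable {k : ℂ} {f : ℝ → ℂ} {x y : ℝ}

theorem halfLineResolventKernel_of_le (h : y ≤ x) :
    halfLineResolventKernel k x y =
      cexp (I * k * x) * ((cexp (I * k * y) - cexp (-(I * k) * y)) / (2 * I * k)) := by
  rw [halfLineResolventKernel, abs_of_nonneg (sub_nonneg.2 h)]
  push_cast
  rw [mul_add, mul_sub, exp_add, exp_sub, neg_mul, exp_neg]
  ring

theorem halfLineResolventKernel_of_ge (h : x ≤ y) :
    halfLineResolventKernel k x y =
      (cexp (I * k * x) - cexp (-(I * k) * x)) / (2 * I * k) * cexp (I * k * y) := by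
  rw [halfLineResolventKernel, abs_sub_comm, abs_of_nonneg (sub_nonneg.2 h)]
  push_cast
  rw [mul_add, mul_sub, exp_add, exp_sub, neg_mul, exp_neg]
  ring

theorem halfLineResolvent_eq_exp_mul {b : ℝ} (hb : Function.support f ⊆ Iic b) (hx : b ≤ x) :
    halfLineResolvent k f x = cexp (I * k * x) *
      ∫ y in Ioi (0 : ℝ), (cexp (I * k * y) - cexp (-(I * k) * y)) / (2 * I * k) * f y := by
  rw [halfLineResolvent, ← integral_const_mul]
  congr 1 with y
  by_cases hy : f y = 0
  · simp [hy]
  · rw [halfLineResolventKernel_of_le ((hb hy).trans hx), mul_assoc]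

theorem halfLineResolvent_eq_duhamelSolution (hf : Continuous f) (hsupp : HasCompactSupport f)
    (hx : 0 ≤ x) :
    halfLineResolvent k f x =
      duhamelSolution (I * k) (∫ y in Ioi (0 : ℝ), cexp (I * k * y) * f y)
        (∫ y in Ioi (0 : ℝ), cexp (I * k * y) * f y) f x := by
  have hint : ∀ g : ℝ → ℂ, Continuous g → Integrable fun y => g y * f y := fun g hg =>
    (hg.mul hf).integrable_of_hasCompactSupport hsupp.mul_left
  have hkernel : Continuous fun y => halfLineResolventKernel k x y := by
    unfold halfLineResolventKernel
    fun_prop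
  have hnear : ∫ y in (0 : ℝ)..x, halfLineResolventKernel k x y * f y =
      ∫ y in (0 : ℝ)..x, cexp (I * k * x) / (2 * I * k) *
        (cexp (I * k * y) * f y - cexp (-(I * k) * y) * f y) := by
    refine intervalIntegral.integral_congr fun y hy => ?_
    rw [uIcc_of_le hx] at hy
    rw [halfLineResolventKernel_of_le hy.2]
    ring
  have hfar : ∫ y in Ioi x, halfLineResolventKernel k x y * f y =
      ∫ y in Ioi x, (cexp (I * k * x) - cexp (-(I * k) * x)) / (2 * I * k) *
        (cexp (I * k * y) * f y) := by
    refine setIntegral_congr_fun measurableSet_Ioi fun y hy => ?_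
    rw [halfLineResolventKernel_of_ge (le_of_lt hy)]
    ring
  have hplus : Integrable fun y : ℝ => cexp (I * k * y) * f y := hint _ (by fun_prop)
  have hminus : Integrable fun y : ℝ => cexp (-(I * k) * y) * f y := hint _ (by fun_prop)
  have htail : ∫ y in Ioi x, cexp (I * k * y) * f y =
      (∫ y in Ioi (0 : ℝ), cexp (I * k * y) * f y) -
        ∫ y in (0 : ℝ)..x, cexp (I * k * y) * f y :=
    eq_sub_of_add_eq' (intervalIntegral.integral_interval_add_Ioi
      hplus.integrableOn hplus.integrableOn)
  rw [halfLineResolvent, ← intervalIntegral.integral_interval_add_Ioi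
      (hint _ hkernel).integrableOn (hint _ hkernel).integrableOn, hnear, hfar,
    intervalIntegral.integral_const_mul, intervalIntegral.integral_sub
      hplus.intervalIntegrable hminus.intervalIntegrable,
    integral_const_mul, htail, duhamelSolution, duhamel, duhamel]
  simp only [neg_neg]
  ring

theorem isBigO_sq_norm_halfLineResolvent (hsupp : HasCompactSupport f) :
    (fun x => ‖halfLineResolvent k f x‖ ^ 2) =O[atTop] fun x => Real.exp (-(2 * k.im) * x) := by
  obtain ⟨b, hb⟩ := hsupp.isCompact.bddAbove
  set C := ∫ y in Ioi (0 : ℝ), (cexp (I * k * y) - cexp (-(I * k) * y)) / (2 * I * k) * f y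
  refine ((isBigO_refl _ _).const_mul_left (‖C‖ ^ 2)).congr' ?_ EventuallyEq.rfl
  filter_upwards [eventually_ge_atTop b] with x hx
  rw [halfLineResolvent_eq_exp_mul (fun y hy => hb (subset_tsupport f hy)) hx, norm_mul, norm_exp,
    mul_pow, ← Real.exp_nat_mul, mul_comm]
  congr 2
  simp only [mul_re, I_re, I_im, ofReal_re, ofReal_im]
  push_cast
  ring

end Resolvent

theorem halfLineResolvent_solves_general (k : ℂ) (hk : 0 < k.im) (f : ℝ → ℂ)
    (hf : Continuous f) (hsupp : HasCompactSupport f) :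
    halfLineResolvent k f 0 = 0 ∧
    IntegrableOn (fun x => ‖halfLineResolvent k f x‖ ^ 2) (Ioi 0) ∧
    ∀ x : ℝ, 0 < x →
      DifferentiableAt ℝ (halfLineResolvent k f) x ∧
      DifferentiableAt ℝ (deriv (halfLineResolvent k f)) x ∧
      -(deriv (deriv (halfLineResolvent k f)) x) - k ^ 2 * halfLineResolvent k f x = f x := by
  have hc : I * k ≠ 0 := mul_ne_zero I_ne_zero (by rintro rfl; simp at hk)
  set A := ∫ y in Ioi (0 : ℝ), cexp (I * k * y) * f y
  set V := duhamelSolution (I * k) A A f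
  have hV : EqOn (halfLineResolvent k f) V (Ici 0) := fun x hx =>
    halfLineResolvent_eq_duhamelSolution hf hsupp hx
  refine ⟨?_, ?_, fun x hx => ?_⟩
  · simp [hV self_mem_Ici, V, duhamelSolution, duhamel]
  · have hVcont : Continuous V :=
      continuous_iff_continuousAt.2 fun x => (hasDerivAt_duhamelSolution hc hf x).continuousAt
    exact integrable_of_isBigO_exp_neg (by positivity)
      ((hVcont.continuousOn.congr hV).norm.pow 2) (isBigO_sq_norm_halfLineResolvent hsupp)
  · have hu : halfLineResolvent k f =ᶠ[𝓝 x] V :=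
      eventually_of_mem (Ioi_mem_nhds hx) fun y hy => hV (mem_Ici.2 (le_of_lt hy))
    have hu' : deriv (halfLineResolvent k f) =ᶠ[𝓝 x]
        fun y => (duhamel (I * k) A f y + duhamel (-(I * k)) A f y) / 2 :=
      hu.deriv.trans (.of_forall fun y => (hasDerivAt_duhamelSolution hc hf y).deriv)
    have hW := hasDerivAt_duhamel_add_div_two (c := I * k) (a := A) (b := A) hf x
    refine ⟨(hasDerivAt_duhamelSolution hc hf x).differentiableAt.congr_of_eventuallyEq hu,
      hW.differentiableAt.congr_of_eventuallyEq hu', ?_⟩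
    rw [hu'.deriv_eq, hW.deriv, hV (mem_Ici.2 hx.le)]
    linear_combination (-V x * k ^ 2) * I_sq

/-- For `Im k > 0` and `f` continuous with compact support in `(0,∞)`, the function
`u(x) = ∫₀^∞ g_k(x,y) f(y) dy` satisfies `u(0) = 0`, is square integrable on `(0,∞)`,
is twice differentiable on `(0,∞)`, and solves `-u'' - k²u = f` there. -/
theorem halfLineResolvent_solves (k : ℂ) (hk : 0 < k.im) (f : ℝ → ℂ)
    (hf : Continuous f) (hsupp : HasCompactSupport f) (hsub : tsupport f ⊆ Ioi 0) :
    halfLineResolvent k f 0 = 0 ∧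
    IntegrableOn (fun x => ‖halfLineResolvent k f x‖ ^ 2) (Ioi 0) ∧
    ∀ x : ℝ, 0 < x →
      DifferentiableAt ℝ (halfLineResolvent k f) x ∧
      DifferentiableAt ℝ (deriv (halfLineResolvent k f)) x ∧
      -(deriv (deriv (halfLineResolvent k f)) x) - k ^ 2 * halfLineResolvent k f x = f x :=
  halfLineResolvent_solves_general k hk f hf hsupp
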